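/- arXiv:1510.00657 — 2 statements merged into one kernel-verified Lean document; each statement's English description precedes it below -/
import Mathlib

section
/- Lam's ideal J_Lam(k) (over Q(q)) contains the scalar extension of the Assaf ideal I_Assaf(k). In particular, for a < b < c with c - a ≤ k, the element u_b u_a u_c - u_a u_c u_b lies in J_Lam(k). -/
open FreeAlgebra

noncomputable section

/-- The free associative algebra `U_q = ℚ(q)⟨u_1,…,u_N⟩`. -/
abbrev Uq (N : ℕ) := FreeAlgebra (RatFunc ℚ) (Fin N)

/-- The variable `q`. -/
def q : RatFunc ℚ := RatFunc.X

/-- Generators of Lam's ideal `J_Lam(k)`: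
`u_a²`; `u_{a+k} u_a u_{a+k}` and `u_a u_{a+k} u_a`; `u_a u_b - u_b u_a` for `b - a > k`;
and `u_a u_b - q⁻¹ u_b u_a` for `0 < b - a < k`. -/
def genLam (N k : ℕ) : Set (Uq N) :=
  {x | ∃ a : Fin N, x = ι (RatFunc ℚ) a * ι (RatFunc ℚ) a} ∪
  {x | ∃ a b : Fin N, (b : ℕ) = (a : ℕ) + k ∧
      x = ι (RatFunc ℚ) b * ι (RatFunc ℚ) a * ι (RatFunc ℚ) b} ∪
  {x | ∃ a b : Fin N, (b : ℕ) = (a : ℕ) + k ∧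
      x = ι (RatFunc ℚ) a * ι (RatFunc ℚ) b * ι (RatFunc ℚ) a} ∪
  {x | ∃ a b : Fin N, (a : ℕ) + k < (b : ℕ) ∧
      x = ι (RatFunc ℚ) a * ι (RatFunc ℚ) b - ι (RatFunc ℚ) b * ι (RatFunc ℚ) a} ∪
  {x | ∃ a b : Fin N, a < b ∧ (b : ℕ) < (a : ℕ) + k ∧
      x = ι (RatFunc ℚ) a * ι (RatFunc ℚ) b - q⁻¹ • (ι (RatFunc ℚ) b * ι (RatFunc ℚ) a)}

/-- Lam's ideal `J_Lam(k)`. -/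
def JLam (N k : ℕ) : TwoSidedIdeal (Uq N) := TwoSidedIdeal.span (genLam N k)

/-- The canonical map `ℤ⟨u_1,…,u_N⟩ → ℚ(q)⟨u_1,…,u_N⟩` (scalar extension). -/
def toUq (N : ℕ) : FreeAlgebra ℤ (Fin N) →ₐ[ℤ] Uq N :=
  FreeAlgebra.lift ℤ (fun i => ι (RatFunc ℚ) i)

/-- The monomial `u_w` of a word `w`, over `ℤ`. -/
def mon {N : ℕ} (w : List (Fin N)) : FreeAlgebra ℤ (Fin N) := (w.map (ι ℤ)).prod

/-- Generators of the Assaf ideal `I_Assaf(k) ⊆ ℤ⟨u_1,…,u_N⟩`: all monomials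
`u_w` lying in `J_Lam(k)`, together with the listed degree-3 binomials. -/
def genAssaf (N k : ℕ) : Set (FreeAlgebra ℤ (Fin N)) :=
  {x | ∃ w : List (Fin N), x = mon w ∧ toUq N (mon w) ∈ JLam N k} ∪
  {x | ∃ a b c : Fin N, a < b ∧ b < c ∧ (a : ℕ) + k < (c : ℕ) ∧
      x = ι ℤ b * ι ℤ a * ι ℤ c - ι ℤ b * ι ℤ c * ι ℤ a} ∪
  {x | ∃ a b c : Fin N, a < b ∧ b < c ∧ (a : ℕ) + k < (c : ℕ) ∧
      x = ι ℤ a * ι ℤ c * ι ℤ b - ι ℤ c * ι ℤ a * ι ℤ b} ∪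
  {x | ∃ a b c : Fin N, a < b ∧ b < c ∧ (c : ℕ) ≤ (a : ℕ) + k ∧
      x = ι ℤ b * ι ℤ a * ι ℤ c - ι ℤ a * ι ℤ c * ι ℤ b} ∪
  {x | ∃ a b c : Fin N, a < b ∧ b < c ∧ (c : ℕ) ≤ (a : ℕ) + k ∧
      x = ι ℤ b * ι ℤ c * ι ℤ a - ι ℤ c * ι ℤ a * ι ℤ b}

/-!
Modulo `J_Lam(k)`, generators at distance greater than `k` commute and generators `u_a, u_b`
with `0 < b - a < k` satisfy `u_a u_b = q⁻¹ u_b u_a`. For `a < b < c ≤ a + k` both pairs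
`(a, b)` and `(b, c)` are of the second kind, and moving `u_b` across `u_a u_c` picks up the
factors `q` and `q⁻¹`, which cancel; this gives the Knuth-type relations of the Assaf ideal.
-/

namespace TwoSidedIdeal

variable {A : Type*} [Ring A] (I : TwoSidedIdeal A)

lemma bac_sub_bca_mem_of_commute_mod {a b c : A} (hac : a * c - c * a ∈ I) :
    b * a * c - b * c * a ∈ I := by
  simpa only [mul_sub, mul_assoc] using I.mul_mem_left b _ hac

lemma acb_sub_cab_mem_of_commute_mod {a b c : A} (hac : a * c - c * a ∈ I) :
    a * c * b - c * a * b ∈ I := by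
  simpa only [sub_mul] using I.mul_mem_right _ b hac

variable {R : Type*} [CommSemiring R] [Algebra R A]

lemma smul_mem (r : R) {x : A} (hx : x ∈ I) : r • x ∈ I := by
  simpa only [Algebra.smul_def] using I.mul_mem_left _ _ hx

lemma bca_sub_cab_mem_of_qcommute_mod (s : R) {a b c : A}
    (hab : a * b - s • (b * a) ∈ I) (hbc : b * c - s • (c * b) ∈ I) :
    b * c * a - c * a * b ∈ I := by
  have h : b * c * a - c * a * b = (b * c - s • (c * b)) * a - c * (a * b - s • (b * a)) := by
    simp only [sub_mul, mul_sub, smul_mul_assoc, mul_smul_comm, mul_assoc]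
    abel
  rw [h]
  exact I.sub_mem (I.mul_mem_right _ _ hbc) (I.mul_mem_left _ _ hab)

lemma bac_sub_acb_mem_of_qcommute_mod {K : Type*} [Field K] [Algebra K A] {s : K} (hs : s ≠ 0)
    {a b c : A}
    (hab : a * b - s • (b * a) ∈ I) (hbc : b * c - s • (c * b) ∈ I) :
    b * a * c - a * c * b ∈ I := by
  have h : b * a * c - a * c * b =
      (-s⁻¹) • ((a * b - s • (b * a)) * c - a * (b * c - s • (c * b))) := by
    simp only [smul_sub, sub_mul, mul_sub, smul_mul_assoc, mul_smul_comm, smul_smul, neg_mul,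
      inv_mul_cancel₀ hs, neg_smul, one_smul, mul_assoc]
    abel
  rw [h]
  exact I.smul_mem _ (I.sub_mem (I.mul_mem_right _ _ hab) (I.mul_mem_left _ _ hbc))

end TwoSidedIdeal

section Lam

variable {N k : ℕ}

lemma commute_mem_JLam {a b : Fin N} (h : (a : ℕ) + k < b) :
    ι (RatFunc ℚ) a * ι (RatFunc ℚ) b - ι (RatFunc ℚ) b * ι (RatFunc ℚ) a ∈ JLam N k :=
  TwoSidedIdeal.subset_span (Or.inl (Or.inr ⟨a, b, h, rfl⟩))

lemma qcommute_mem_JLam {a b : Fin N} (hab : a < b) (hb : (b : ℕ) < a + k) :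
    ι (RatFunc ℚ) a * ι (RatFunc ℚ) b - q⁻¹ • (ι (RatFunc ℚ) b * ι (RatFunc ℚ) a) ∈ JLam N k :=
  TwoSidedIdeal.subset_span (Or.inr ⟨a, b, hab, hb, rfl⟩)

lemma bac_sub_acb_mem_JLam {a b c : Fin N} (hab : a < b) (hbc : b < c) (hc : (c : ℕ) ≤ a + k) :
    ι (RatFunc ℚ) b * ι (RatFunc ℚ) a * ι (RatFunc ℚ) c
      - ι (RatFunc ℚ) a * ι (RatFunc ℚ) c * ι (RatFunc ℚ) b ∈ JLam N k :=
  (JLam N k).bac_sub_acb_mem_of_qcommute_mod (inv_ne_zero RatFunc.X_ne_zero)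
    (qcommute_mem_JLam hab (by omega)) (qcommute_mem_JLam hbc (by omega))

lemma bca_sub_cab_mem_JLam {a b c : Fin N} (hab : a < b) (hbc : b < c) (hc : (c : ℕ) ≤ a + k) :
    ι (RatFunc ℚ) b * ι (RatFunc ℚ) c * ι (RatFunc ℚ) a
      - ι (RatFunc ℚ) c * ι (RatFunc ℚ) a * ι (RatFunc ℚ) b ∈ JLam N k :=
  (JLam N k).bca_sub_cab_mem_of_qcommute_mod q⁻¹
    (qcommute_mem_JLam hab (by omega)) (qcommute_mem_JLam hbc (by omega))

@[simp]
lemma toUq_ι (i : Fin N) : toUq N (ι ℤ i) = ι (RatFunc ℚ) i :=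
  FreeAlgebra.lift_ι_apply _ _

lemma genAssaf_subset_comap_JLam : genAssaf N k ⊆ TwoSidedIdeal.comap (toUq N) (JLam N k) := by
  rintro y ((((⟨w, rfl, hw⟩ | ⟨a, b, c, -, -, hc, rfl⟩) | ⟨a, b, c, -, -, hc, rfl⟩) |
    ⟨a, b, c, hab, hbc, hc, rfl⟩) | ⟨a, b, c, hab, hbc, hc, rfl⟩) <;>
    simp only [SetLike.mem_coe, TwoSidedIdeal.mem_comap (toUq N), map_sub, map_mul, toUq_ι]
  · exact hw
  · exact (JLam N k).bac_sub_bca_mem_of_commute_mod (commute_mem_JLam hc)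
  · exact (JLam N k).acb_sub_cab_mem_of_commute_mod (commute_mem_JLam hc)
  · exact bac_sub_acb_mem_JLam hab hbc hc
  · exact bca_sub_cab_mem_JLam hab hbc hc

end Lam

theorem stmt11_general (N k : ℕ) :
    (∀ x ∈ TwoSidedIdeal.span (genAssaf N k), toUq N x ∈ JLam N k) ∧
    (∀ a b c : Fin N, a < b → b < c → (c : ℕ) ≤ (a : ℕ) + k →
      ι (RatFunc ℚ) b * ι (RatFunc ℚ) a * ι (RatFunc ℚ) c
        - ι (RatFunc ℚ) a * ι (RatFunc ℚ) c * ι (RatFunc ℚ) b ∈ JLam N k) :=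
  ⟨fun _ hx => (TwoSidedIdeal.mem_comap (toUq N)).mp
      (TwoSidedIdeal.span_le.mpr genAssaf_subset_comap_JLam hx),
    fun _ _ _ => bac_sub_acb_mem_JLam⟩

/-- `J_Lam(k)` contains the scalar extension of the Assaf ideal `I_Assaf(k)`;
in particular `u_b u_a u_c - u_a u_c u_b ∈ J_Lam(k)` whenever `a < b < c` and `c - a ≤ k`. -/
theorem stmt11 (N k : ℕ) (hk : 0 < k) :
    (∀ x ∈ TwoSidedIdeal.span (genAssaf N k), toUq N x ∈ JLam N k) ∧
    (∀ a b c : Fin N, a < b → b < c → (c : ℕ) ≤ (a : ℕ) + k →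
      ι (RatFunc ℚ) b * ι (RatFunc ℚ) a * ι (RatFunc ℚ) c
        - ι (RatFunc ℚ) a * ι (RatFunc ℚ) c * ι (RatFunc ℚ) b ∈ JLam N k) :=
  stmt11_general N k

end
end

section
/- In the free associative ring Z⟨u_1,...,u_N⟩, modulo the ideal I_C generated by the elements (1) u_b²u_a + u_a u_b u_a - u_b u_a u_b - u_b u_a² for a < b, (2) u_b u_c u_a + u_a u_c u_b - u_b u_a u_c - u_c u_a u_b for a < b < c, and (3) u_c u_b u_c u_a + u_b u_c u_a u_c - u_c u_b u_a u_c - u_b u_c² u_a for a < b < c, the noncommutative elementary symmetric functions e_1(u_S) and e_2(u_S) commute for every subset S ⊆ {1,...,N} with |S| ≤ 3. -/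
/-!
Write `e_k(S)` as the sum, over `k`-subsets `T ⊆ S`, of the product of the `u_i`, `i ∈ T`, in
decreasing order of index. If `a` lies below every element of `S`, splitting the subsets of
`{a} ∪ S` by whether they contain `a` gives `e_{k+1}({a} ∪ S) = e_{k+1}(S) + e_k(S) u_a`.
Hence `e_2 = 0` when `|S| ≤ 1`, `e_2(u_a, u_b) = u_b u_a`, and
`e_2(u_a, u_b, u_c) = u_c u_b + (u_b + u_c) u_a` for `a < b < c`. Expanding the commutator
`[e_1, e_2]` then gives exactly relation (1) for `a < b` in the two-element case, and the sum of
relation (1) for the three pairs and relation (2) for the triple in the three-element case.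
-/

open FreeAlgebra

/-- Noncommutative elementary symmetric function `e_k(u_S)`. -/
noncomputable def ncElem (N : ℕ) (k : ℤ) (S : Finset (Fin N)) : FreeAlgebra ℤ (Fin N) :=
  if k < 0 then 0 else
  ∑ T ∈ S.powersetCard k.toNat, (((T.sort (· ≤ ·)).reverse).map (ι ℤ)).prod

/-- Generators of the ideal `I_C`. -/
def genC (N : ℕ) : Set (FreeAlgebra ℤ (Fin N)) :=
  {x | ∃ a b : Fin N, a < b ∧
      x = ι ℤ b * ι ℤ b * ι ℤ a + ι ℤ a * ι ℤ b * ι ℤ a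
        - ι ℤ b * ι ℤ a * ι ℤ b - ι ℤ b * ι ℤ a * ι ℤ a} ∪
  {x | ∃ a b c : Fin N, a < b ∧ b < c ∧
      x = ι ℤ b * ι ℤ c * ι ℤ a + ι ℤ a * ι ℤ c * ι ℤ b
        - ι ℤ b * ι ℤ a * ι ℤ c - ι ℤ c * ι ℤ a * ι ℤ b} ∪
  {x | ∃ a b c : Fin N, a < b ∧ b < c ∧
      x = ι ℤ c * ι ℤ b * ι ℤ c * ι ℤ a + ι ℤ b * ι ℤ c * ι ℤ a * ι ℤ c
        - ι ℤ c * ι ℤ b * ι ℤ a * ι ℤ c - ι ℤ b * ι ℤ c * ι ℤ c * ι ℤ a}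

namespace Finset

variable {α : Type*} [LinearOrder α] {s : Finset α}

theorem exists_lt_eq_pair_of_card_eq_two (h : s.card = 2) :
    ∃ a b, a < b ∧ s = {a, b} := by
  let f := s.orderEmbOfFin h
  refine ⟨f 0, f 1, f.strictMono (by decide), ?_⟩
  ext x
  rw [← mem_coe, ← range_orderEmbOfFin s h, Set.mem_range, Fin.exists_fin_two]
  simp [eq_comm, f]

theorem exists_lt_lt_eq_triple_of_card_eq_three (h : s.card = 3) :
    ∃ a b c, a < b ∧ b < c ∧ s = {a, b, c} := by
  let f := s.orderEmbOfFin h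
  refine ⟨f 0, f 1, f 2, f.strictMono (by decide), f.strictMono (by decide), ?_⟩
  ext x
  rw [← mem_coe, ← range_orderEmbOfFin s h, Set.mem_range, Fin.exists_fin_succ,
    Fin.exists_fin_two]
  simp [eq_comm, f]

end Finset

section

variable {N : ℕ}

noncomputable def ncMonomial (T : Finset (Fin N)) : FreeAlgebra ℤ (Fin N) :=
  ((T.sort (· ≤ ·)).reverse.map (ι ℤ)).prod

theorem ncMonomial_singleton (a : Fin N) : ncMonomial {a} = ι ℤ a := by
  simp [ncMonomial]

theorem ncMonomial_insert_of_forall_lt {a : Fin N} {T : Finset (Fin N)} (ha : ∀ b ∈ T, a < b) :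
    ncMonomial (insert a T) = ncMonomial T * ι ℤ a := by
  rw [ncMonomial, Finset.sort_insert _ (fun b hb => (ha b hb).le) (fun h => (ha a h).false)]
  simp [ncMonomial]

theorem ncElem_natCast (k : ℕ) (S : Finset (Fin N)) :
    ncElem N k S = ∑ T ∈ S.powersetCard k, ncMonomial T := by
  simp [ncElem, ncMonomial]

theorem ncElem_one (S : Finset (Fin N)) : ncElem N 1 S = ∑ i ∈ S, ι ℤ i := by
  simpa [Finset.powersetCard_one, ncMonomial_singleton] using ncElem_natCast 1 S

theorem ncElem_two_of_card_lt_two {S : Finset (Fin N)} (h : S.card < 2) : ncElem N 2 S = 0 := by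
  simpa [Finset.powersetCard_eq_empty.2 h] using ncElem_natCast 2 S

theorem ncElem_succ_insert_of_forall_lt (k : ℕ) {a : Fin N} {S : Finset (Fin N)}
    (ha : ∀ b ∈ S, a < b) :
    ncElem N (k + 1) (insert a S) = ncElem N (k + 1) S + ncElem N k S * ι ℤ a := by
  have haS : a ∉ S := fun h => (ha a h).false
  have hsucc (S' : Finset (Fin N)) := ncElem_natCast (k + 1) S'
  push_cast at hsucc
  rw [hsucc, hsucc, ncElem_natCast, Finset.powersetCard_succ_insert haS,
    Finset.sum_union, Finset.sum_image, Finset.sum_mul]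
  · congr 1
    refine Finset.sum_congr rfl fun T hT => ?_
    exact ncMonomial_insert_of_forall_lt fun b hb => ha b ((Finset.mem_powersetCard.1 hT).1 hb)
  · intro T₁ hT₁ T₂ hT₂ h
    have haT {T} (hT : T ∈ S.powersetCard k) : a ∉ T :=
      fun h => haS ((Finset.mem_powersetCard.1 hT).1 h)
    rw [← Finset.erase_insert (haT hT₁), ← Finset.erase_insert (haT hT₂), h]
  · refine Finset.disjoint_left.2 fun T hT hT' => ?_
    obtain ⟨T', -, rfl⟩ := Finset.mem_image.1 hT'
    exact haS ((Finset.mem_powersetCard.1 hT).1 (Finset.mem_insert_self a T'))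

theorem ncElem_two_pair {a b : Fin N} (hab : a < b) : ncElem N 2 {a, b} = ι ℤ b * ι ℤ a := by
  rw [show (2 : ℤ) = (1 : ℕ) + 1 by norm_num,
    ncElem_succ_insert_of_forall_lt 1 (by simpa using hab)]
  push_cast
  rw [ncElem_two_of_card_lt_two (by simp), ncElem_one, Finset.sum_singleton, zero_add]

theorem ncElem_two_triple {a b c : Fin N} (hab : a < b) (hbc : b < c) :
    ncElem N 2 {a, b, c} = ι ℤ c * ι ℤ b + (ι ℤ b + ι ℤ c) * ι ℤ a := by
  rw [show (2 : ℤ) = (1 : ℕ) + 1 by norm_num,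
    ncElem_succ_insert_of_forall_lt 1 (by simpa using ⟨hab, hab.trans hbc⟩)]
  push_cast
  rw [ncElem_two_pair hbc, ncElem_one, Finset.sum_pair hbc.ne]

theorem mem_span_genC_of_lt {a b : Fin N} (hab : a < b) :
    ι ℤ b * ι ℤ b * ι ℤ a + ι ℤ a * ι ℤ b * ι ℤ a - ι ℤ b * ι ℤ a * ι ℤ b - ι ℤ b * ι ℤ a * ι ℤ a
      ∈ TwoSidedIdeal.span (genC N) :=
  TwoSidedIdeal.subset_span (Or.inl (Or.inl ⟨a, b, hab, rfl⟩))

theorem mem_span_genC_of_lt_of_lt {a b c : Fin N} (hab : a < b) (hbc : b < c) :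
    ι ℤ b * ι ℤ c * ι ℤ a + ι ℤ a * ι ℤ c * ι ℤ b - ι ℤ b * ι ℤ a * ι ℤ c - ι ℤ c * ι ℤ a * ι ℤ b
      ∈ TwoSidedIdeal.span (genC N) :=
  TwoSidedIdeal.subset_span (Or.inl (Or.inr ⟨a, b, c, hab, hbc, rfl⟩))

theorem ncElem_one_mul_two_sub_mem_span_genC_pair {a b : Fin N} (hab : a < b) :
    ncElem N 1 {a, b} * ncElem N 2 {a, b} - ncElem N 2 {a, b} * ncElem N 1 {a, b}
      ∈ TwoSidedIdeal.span (genC N) := by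
  rw [ncElem_one, ncElem_two_pair hab, Finset.sum_pair hab.ne]
  convert mem_span_genC_of_lt hab using 1
  noncomm_ring

theorem ncElem_one_mul_two_sub_mem_span_genC_triple {a b c : Fin N} (hab : a < b)
    (hbc : b < c) :
    ncElem N 1 {a, b, c} * ncElem N 2 {a, b, c} - ncElem N 2 {a, b, c} * ncElem N 1 {a, b, c}
      ∈ TwoSidedIdeal.span (genC N) := by
  have hac := hab.trans hbc
  rw [ncElem_one, ncElem_two_triple hab hbc, Finset.sum_insert (by simp [hab.ne, hac.ne]),
    Finset.sum_pair hbc.ne]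
  convert add_mem (add_mem (add_mem (mem_span_genC_of_lt hab) (mem_span_genC_of_lt hac))
    (mem_span_genC_of_lt hbc)) (mem_span_genC_of_lt_of_lt hab hbc) using 1
  noncomm_ring

end

/-- Modulo `I_C`, the elementary symmetric functions `e_1(u_S)` and `e_2(u_S)`
commute for every subset `S` with at most 3 elements. -/
theorem stmt18 (N : ℕ) (S : Finset (Fin N)) (hS : S.card ≤ 3) :
    ncElem N 1 S * ncElem N 2 S - ncElem N 2 S * ncElem N 1 S
      ∈ TwoSidedIdeal.span (genC N) := by
  obtain h | h | h : S.card < 2 ∨ S.card = 2 ∨ S.card = 3 := by omega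
  · simp [ncElem_two_of_card_lt_two h]
  · obtain ⟨a, b, hab, rfl⟩ := Finset.exists_lt_eq_pair_of_card_eq_two h
    exact ncElem_one_mul_two_sub_mem_span_genC_pair hab
  · obtain ⟨a, b, c, hab, hbc, rfl⟩ := Finset.exists_lt_lt_eq_triple_of_card_eq_three h
    exact ncElem_one_mul_two_sub_mem_span_genC_triple hab hbc
end
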